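/- Let f : A → A' be a homomorphism of skew Boolean ∩-algebras. Then the image of f is D-saturated (i.e., for all a ∈ A and b ∈ A', if f(a) D b then b lies in the image of f) if and only if f maps each D-class surjectively onto a D-class (i.e., for all a ∈ A and b ∈ A' with f(a) D b there exists a' ∈ A with a' D a and f(a') = b). -/
import Mathlib


universe u

/-- A skew Boolean ∩-algebra. -/
class SkewBooleanInterAlgebra (α : Type u) where
  meet : α → α → α
  join : α → α → α
  zero : α
  rcomp : α → α → α
  inter : α → α → α
  meet_idem : ∀ x, meet x x = x
  meet_assoc : ∀ x y z, meet (meet x y) z = meet x (meet y z)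
  join_idem : ∀ x, join x x = x
  join_assoc : ∀ x y z, join (join x y) z = join x (join y z)
  absorb₁ : ∀ x y, meet x (join x y) = x
  absorb₂ : ∀ x y, meet (join y x) x = x
  absorb₃ : ∀ x y, join x (meet x y) = x
  absorb₄ : ∀ x y, join (meet y x) x = x
  meet_distrib_left : ∀ x y z, meet x (join y z) = join (meet x y) (meet x z)
  meet_distrib_right : ∀ x y z, meet (join y z) x = join (meet y x) (meet z x)
  zero_join : ∀ x, join zero x = x
  join_zero : ∀ x, join x zero = x
  rcomp_meet : ∀ x y, meet (rcomp x y) (meet x (meet y x)) = zero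
  rcomp_join : ∀ x y, join (rcomp x y) (meet x (meet y x)) = x
  normality : ∀ x y z w, meet x (meet y (meet z w)) = meet x (meet z (meet y w))
  regularity : ∀ x y z, join x (join y (join x (join z x))) = join x (join y (join z x))
  inter_le_left : ∀ x y, meet (inter x y) x = inter x y ∧ meet x (inter x y) = inter x y
  inter_le_right : ∀ x y, meet (inter x y) y = inter x y ∧ meet y (inter x y) = inter x y
  inter_glb : ∀ x y z, (meet z x = z ∧ meet x z = z) → (meet z y = z ∧ meet y z = z) →
    meet z (inter x y) = z ∧ meet (inter x y) z = z

namespace SkewBooleanInterAlgebra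

variable {α : Type u} [SkewBooleanInterAlgebra α]

/-- The natural partial order: `x ≤ y` iff `x∧y = x = y∧x`. -/
def nle (x y : α) : Prop := meet x y = x ∧ meet y x = x

/-- The natural preorder: `x ≼ y` iff `x∧y∧x = x`. -/
def npre (x y : α) : Prop := meet x (meet y x) = x

/-- Green's relation `D`: `x D y` iff `x ≼ y` and `y ≼ x`. -/
def dGreen (x y : α) : Prop := npre x y ∧ npre y x

/-- An ideal: contains `0`, closed under `∨`, downward closed under `≼`. -/
def IsIdeal (I : Set α) : Prop :=
  zero ∈ I ∧ (∀ x ∈ I, ∀ y ∈ I, join x y ∈ I) ∧ (∀ x y : α, y ∈ I → npre x y → x ∈ I)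

/-- A prime ideal: a proper ideal such that `a∧b ∈ P` implies `a ∈ P` or `b ∈ P`. -/
def IsPrimeIdeal (P : Set α) : Prop :=
  IsIdeal P ∧ P ≠ Set.univ ∧ ∀ a b : α, meet a b ∈ P → a ∈ P ∨ b ∈ P

/-- The congruence `θ_P` associated with an ideal `P`. -/
def theta (P : Set α) (x y : α) : Prop :=
  join (rcomp x (inter x y)) (rcomp y (inter x y)) ∈ P

end SkewBooleanInterAlgebra

open SkewBooleanInterAlgebra

section Aux

variable {γ : Type u} [SkewBooleanInterAlgebra γ]

private lemma meet_zero' (x : γ) : meet x zero = zero := by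
  have h := absorb₂ (zero : γ) x
  rwa [join_zero] at h

private lemma zero_meet' (x : γ) : meet zero x = zero := by
  have h := absorb₁ (zero : γ) x
  rwa [zero_join] at h

private lemma eq_zero_of_npre_zero {x : γ} (h : meet x (meet zero x) = x) : x = zero := by
  rw [zero_meet', meet_zero'] at h
  exact h.symm

private lemma npre_swap (u v : γ) :
    meet (meet u v) (meet (meet v u) (meet u v)) = meet u v := by
  have h1 : meet (meet v u) (meet u v) = meet v (meet u v) := by
    rw [meet_assoc, ← meet_assoc u u v, meet_idem]
  rw [h1, meet_assoc u v, ← meet_assoc v v, meet_idem, normality, meet_idem,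
    ← meet_assoc, meet_idem]

private lemma meet_zero_comm {p q : γ} (h : meet p q = zero) : meet q p = zero := by
  apply eq_zero_of_npre_zero
  have := npre_swap q p
  rwa [h] at this

private lemma rcomp_meet_self (x y : γ) : meet (rcomp x y) x = rcomp x y := by
  have h := absorb₁ (rcomp x y) (meet x (meet y x))
  rwa [rcomp_join] at h

private lemma meet_rcomp_self (x y : γ) : meet x (rcomp x y) = rcomp x y := by
  have h := meet_distrib_right (rcomp x y) (rcomp x y) (meet x (meet y x))
  rw [rcomp_join, meet_idem, meet_zero_comm (rcomp_meet x y), join_zero] at h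
  exact h

private lemma rcomp_y (x y : γ) : meet (rcomp x y) y = zero := by
  have hxy : meet (rcomp x y) y = meet (rcomp x y) (meet x y) := by
    conv_lhs => rw [← rcomp_meet_self x y]
    rw [meet_assoc]
  have hx : meet (meet (rcomp x y) (meet x y)) x = zero := by
    rw [meet_assoc, meet_assoc]
    exact rcomp_meet x y
  have key : meet (rcomp x y) (meet x y) = zero := by
    have hidem : meet (rcomp x y) (meet x y)
        = meet (meet (rcomp x y) (meet x y)) (meet (rcomp x y) (meet x y)) := by
      rw [meet_idem]
    rw [hidem, normality, ← meet_assoc, hx, zero_meet']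
  rw [hxy, key]

private lemma dGreen_patch (x y : γ) :
    dGreen (join (rcomp x y) (meet y (meet x y))) x := by
  set c := rcomp x y with hc
  set e' := meet y (meet x y) with he'
  have hcx : meet c x = c := rcomp_meet_self x y
  have hxc : meet x c = c := meet_rcomp_self x y
  have hce' : meet c e' = zero := by
    rw [he', normality, meet_idem, ← meet_assoc, hcx]
    exact rcomp_y x y
  have he'c : meet e' c = zero := meet_zero_comm hce'
  have hxe' : meet x e' = meet x y := by
    rw [he', normality, meet_idem, ← meet_assoc, meet_idem]
  have he'xy : meet e' (meet x y) = e' := by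
    rw [he', meet_assoc, meet_idem]
  have he'x : meet e' x = meet y x := by
    rw [he', meet_assoc, meet_assoc, normality, meet_idem, ← meet_assoc, meet_idem]
  constructor
  · show meet (join c e') (meet x (join c e')) = join c e'
    rw [meet_distrib_left, hxc, hxe', meet_distrib_right,
      absorb₁, meet_distrib_left, he'c, zero_join, he'xy]
  · show meet x (meet (join c e') x) = x
    rw [meet_distrib_right, hcx, he'x, meet_distrib_left, hxc]
    exact rcomp_join x y

private lemma patch_of_dGreen {u v : γ} (h : dGreen u v) :
    join (rcomp u v) (meet v (meet u v)) = v := by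
  obtain ⟨h1, h2⟩ := h
  have hz : rcomp u v = zero := by
    have hm := rcomp_meet u v
    rw [h1] at hm
    have ha := absorb₁ (rcomp u v) (meet u (meet v u))
    rw [rcomp_join] at ha
    exact ha.symm.trans hm
  rw [hz, zero_join]
  exact h2

end Aux

theorem dSaturated_iff_maps_dClasses_onto {α β : Type u}
    [SkewBooleanInterAlgebra α] [SkewBooleanInterAlgebra β] (f : α → β)
    (hzero : f zero = zero)
    (hmeet : ∀ x y : α, f (meet x y) = meet (f x) (f y))
    (hjoin : ∀ x y : α, f (join x y) = join (f x) (f y))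
    (hrcomp : ∀ x y : α, f (rcomp x y) = rcomp (f x) (f y))
    (hinter : ∀ x y : α, f (inter x y) = inter (f x) (f y)) :
    (∀ (a : α) (b : β), dGreen (f a) b → ∃ a' : α, f a' = b) ↔
      (∀ (a : α) (b : β), dGreen (f a) b → ∃ a' : α, dGreen a' a ∧ f a' = b) := by
  constructor
  · intro h a b hD
    obtain ⟨a', ha'⟩ := h a b hD
    refine ⟨join (rcomp a a') (meet a' (meet a a')), dGreen_patch a a', ?_⟩
    rw [hjoin, hrcomp, hmeet, hmeet, ha']
    exact patch_of_dGreen hD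
  · intro h a b hD
    obtain ⟨a', _, ha'⟩ := h a b hD
    exact ⟨a', ha'⟩
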